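/- arXiv:1804.08585 — 4 statements merged into one kernel-verified Lean document; each statement's English description precedes it below -/
import Mathlib

section
/- Let E be an exact category with enough projectives and P a projective cover of E. If E is cartesian closed, then P has pseudo simple products: every span J ← Y → X in P admits a pseudo simple product. -/
open CategoryTheory Limits

namespace ExComp

universe v u

variable {E : Type u} [Category.{v} E]

/-- A regular epimorphism, as a property of a morphism. -/
def RegEpi {A B : E} (f : A ⟶ B) : Prop := Nonempty (RegularEpi f)

/-- An object is (regular) projective if its covariant hom functor sends regular
epimorphisms to surjections. -/
def RegProjective (X : E) : Prop :=
  ∀ ⦃A B : E⦄ (e : A ⟶ B), RegEpi e → ∀ f : X ⟶ B, ∃ g : X ⟶ A, g ≫ e = f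

/-- `E` has enough projectives: every object admits a regular epimorphism from a
projective object. -/
def EnoughRegProjectives (E : Type u) [Category.{v} E] : Prop :=
  ∀ A : E, ∃ (X : E) (p : X ⟶ A), RegProjective X ∧ RegEpi p

/-- An internal equivalence relation: a jointly monic, reflexive, symmetric and
transitive pair of parallel arrows. -/
structure IsEquivRelPair {R X : E} (r₁ r₂ : R ⟶ X) : Prop where
  jointlyMono : ∀ ⦃T : E⦄ (h k : T ⟶ R), h ≫ r₁ = k ≫ r₁ → h ≫ r₂ = k ≫ r₂ → h = k
  refl : ∃ d : X ⟶ R, d ≫ r₁ = 𝟙 X ∧ d ≫ r₂ = 𝟙 X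
  symm : ∃ s : R ⟶ R, s ≫ r₁ = r₂ ∧ s ≫ r₂ = r₁
  trans : ∀ ⦃T : E⦄ (p q : T ⟶ R), p ≫ r₂ = q ≫ r₁ →
    ∃ t : T ⟶ R, t ≫ r₁ = p ≫ r₁ ∧ t ≫ r₂ = q ≫ r₂

/-- An exact category: a finitely complete category where every morphism factors as a
regular epi followed by a mono, regular epis are stable under pullback, and every
internal equivalence relation is effective (it is the kernel pair of the coequaliser
it admits). -/
structure IsExact (E : Type u) [Category.{v} E] [HasFiniteLimits E] : Prop where
  factor : ∀ ⦃A B : E⦄ (f : A ⟶ B), ∃ (I : E) (e : A ⟶ I) (m : I ⟶ B),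
    RegEpi e ∧ Mono m ∧ e ≫ m = f
  stable : ∀ ⦃A B C : E⦄ (f : A ⟶ B) (g : C ⟶ B), RegEpi f → RegEpi (pullback.snd f g)
  effective : ∀ ⦃R X : E⦄ (r₁ r₂ : R ⟶ X), IsEquivRelPair r₁ r₂ →
    ∃ (Q : E) (q : X ⟶ Q) (w : r₁ ≫ q = r₂ ≫ q),
      Nonempty (IsColimit (Cofork.ofπ q w)) ∧ IsPullback r₁ r₂ q q

/-- A projective cover of `E`: a (full sub)collection of objects, each projective,
such that every object of `E` admits a regular epimorphism from one of them. -/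
def IsProjectiveCover (P : Set E) : Prop :=
  (∀ X ∈ P, RegProjective X) ∧ ∀ A : E, ∃ X ∈ P, ∃ p : X ⟶ A, RegEpi p

section FinLim
variable [HasFiniteLimits E]

/-- `X` is internally projective: every arrow `T ⨯ X ⟶ B` lifts along a regular epi
`A ↠ B` after passing to a regular epi `U ↠ T`. -/
def InternallyProjective (X : E) : Prop :=
  ∀ ⦃T A B : E⦄ (e : A ⟶ B), RegEpi e → ∀ f : T ⨯ X ⟶ B,
    ∃ (U : E) (u : U ⟶ T) (g : U ⨯ X ⟶ A), RegEpi u ∧ g ≫ e = prod.map u (𝟙 X) ≫ f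

/-- Cartesian closure, as a property: for every object `X` the functor `(−) ⨯ X` has a
right adjoint. -/
def CartesianClosedP (E : Type u) [Category.{v} E] [HasFiniteLimits E] : Prop :=
  ∀ X : E, (prod.functor.flip.obj X).IsLeftAdjoint

/-- Local cartesian closure, as a property: every slice is cartesian closed. -/
def LocallyCartesianClosedP (E : Type u) [Category.{v} E] [HasFiniteLimits E] : Prop :=
  ∀ (I : E) (F : Over I), ((prod.functor (C := Over I)).flip.obj F).IsLeftAdjoint

end FinLim

/-! ## Weak products and weak simple products -/

/-- A weak product in `P` of `X` and `Y`: a span through which every span in `P`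
factors (not necessarily uniquely). -/
structure IsWeakProduct (P : Set E) {X Y V : E} (p : V ⟶ X) (q : V ⟶ Y) : Prop where
  mem : V ∈ P
  lift : ∀ ⦃V' : E⦄, V' ∈ P → ∀ (p' : V' ⟶ X) (q' : V' ⟶ Y),
    ∃ h : V' ⟶ V, h ≫ p = p' ∧ h ≫ q = q'

/-- An arrow out of a weak product is determined by projections if it coequalises
every pair of arrows (from an object of `P`) coequalised by both projections. -/
def DeterminedByProjections (P : Set E) {V X Y Z : E} (p : V ⟶ X) (q : V ⟶ Y)
    (f : V ⟶ Z) : Prop :=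
  ∀ ⦃V' : E⦄, V' ∈ P → ∀ (h k : V' ⟶ V), h ≫ p = k ≫ p → h ≫ q = k ≫ q → h ≫ f = k ≫ f

/-- A candidate diagram for a weak simple product of a span `J ←f Y →g X`. -/
structure WSPCone (P : Set E) {J Y X : E} (f : Y ⟶ J) (g : Y ⟶ X)
    (W V : E) (w : W ⟶ J) (p : V ⟶ W) (q : V ⟶ X) (e : V ⟶ Y) : Prop where
  memW : W ∈ P
  wp : IsWeakProduct P p q
  det : DeterminedByProjections P p q e
  comm₁ : p ≫ w = e ≫ f
  comm₂ : q = e ≫ g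

/-- A weak simple product: a weakly terminal candidate diagram. -/
structure IsWeakSimpleProduct (P : Set E) {J Y X : E} (f : Y ⟶ J) (g : Y ⟶ X)
    (W V : E) (w : W ⟶ J) (p : V ⟶ W) (q : V ⟶ X) (e : V ⟶ Y) : Prop where
  cone : WSPCone P f g W V w p q e
  lift : ∀ ⦃W' V' : E⦄ (w' : W' ⟶ J) (p' : V' ⟶ W') (q' : V' ⟶ X) (e' : V' ⟶ Y),
    WSPCone P f g W' V' w' p' q' e' →
    ∃ (α : W' ⟶ W) (β : V' ⟶ V),
      α ≫ w = w' ∧ β ≫ p = p' ≫ α ∧ β ≫ q = q' ∧ β ≫ e = e'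

/-- `P` has weak simple products. -/
def HasWeakSimpleProducts (P : Set E) : Prop :=
  ∀ ⦃J Y X : E⦄, J ∈ P → Y ∈ P → X ∈ P → ∀ (f : Y ⟶ J) (g : Y ⟶ X),
    ∃ (W V : E) (w : W ⟶ J) (p : V ⟶ W) (q : V ⟶ X) (e : V ⟶ Y),
      IsWeakSimpleProduct P f g W V w p q e

/-! ## Pseudo simple products -/

/-- A candidate diagram for a pseudo simple product (no determinacy requirement). -/
structure PSPCone (P : Set E) {J Y X : E} (f : Y ⟶ J) (g : Y ⟶ X)
    (W V : E) (w : W ⟶ J) (p : V ⟶ W) (q : V ⟶ X) (e : V ⟶ Y) : Prop where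
  memW : W ∈ P
  wp : IsWeakProduct P p q
  comm₁ : p ≫ w = e ≫ f
  comm₂ : q = e ≫ g

/-- A pseudo simple product: a weakly terminal candidate diagram. -/
structure IsPseudoSimpleProduct (P : Set E) {J Y X : E} (f : Y ⟶ J) (g : Y ⟶ X)
    (W V : E) (w : W ⟶ J) (p : V ⟶ W) (q : V ⟶ X) (e : V ⟶ Y) : Prop where
  cone : PSPCone P f g W V w p q e
  lift : ∀ ⦃W' V' : E⦄ (w' : W' ⟶ J) (p' : V' ⟶ W') (q' : V' ⟶ X) (e' : V' ⟶ Y),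
    PSPCone P f g W' V' w' p' q' e' →
    ∃ (α : W' ⟶ W) (β : V' ⟶ V),
      α ≫ w = w' ∧ β ≫ p = p' ≫ α ∧ β ≫ q = q' ∧ β ≫ e = e'

/-- `P` has pseudo simple products. -/
def HasPseudoSimpleProducts (P : Set E) : Prop :=
  ∀ ⦃J Y X : E⦄, J ∈ P → Y ∈ P → X ∈ P → ∀ (f : Y ⟶ J) (g : Y ⟶ X),
    ∃ (W V : E) (w : W ⟶ J) (p : V ⟶ W) (q : V ⟶ X) (e : V ⟶ Y),
      IsPseudoSimpleProduct P f g W V w p q e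

/-! ## Weak exponentials -/

/-- A candidate diagram for a weak exponential of `X` and `Y`. -/
structure WExpCone (P : Set E) {X Y : E} (W V : E) (p : V ⟶ W) (q : V ⟶ X)
    (e : V ⟶ Y) : Prop where
  memW : W ∈ P
  wp : IsWeakProduct P p q
  det : DeterminedByProjections P p q e

/-- A weak exponential of `X` and `Y` in `P`. -/
structure IsWeakExponential (P : Set E) {X Y : E} (W V : E) (p : V ⟶ W) (q : V ⟶ X)
    (e : V ⟶ Y) : Prop where
  cone : WExpCone P W V p q e
  lift : ∀ ⦃W' V' : E⦄ (p' : V' ⟶ W') (q' : V' ⟶ X) (e' : V' ⟶ Y),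
    WExpCone P W' V' p' q' e' →
    ∃ (α : W' ⟶ W) (β : V' ⟶ V), β ≫ p = p' ≫ α ∧ β ≫ q = q' ∧ β ≫ e = e'

/-- `P` has weak exponentials. -/
def HasWeakExponentials (P : Set E) : Prop :=
  ∀ ⦃X Y : E⦄, X ∈ P → Y ∈ P →
    ∃ (W V : E) (p : V ⟶ W) (q : V ⟶ X) (e : V ⟶ Y), IsWeakExponential P W V p q e

/-- A quasi exponential of `X` and `B`: the weak universal property of an exponential
restricted to projective sources. -/
def IsQuasiExponential [HasFiniteLimits E] (P : Set E) (X : E) {B : E} (W : E)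
    (e : W ⨯ X ⟶ B) : Prop :=
  ∀ ⦃Z : E⦄, Z ∈ P → ∀ f : Z ⨯ X ⟶ B, ∃ g : Z ⟶ W, prod.map g (𝟙 X) ≫ e = f

section FinLim2
variable [HasFiniteLimits E]

/-! ## Pseudo equivalence relations, equalities and generalised weak (simple) products -/

/-- A pseudo equivalence relation: a pair of parallel arrows whose image in `E` is an
equivalence relation. -/
def IsPseudoEquivRel {Y1 Y0 : E} (y₁ y₂ : Y1 ⟶ Y0) : Prop :=
  ∃ (R : E) (e : Y1 ⟶ R) (m : R ⟶ Y0 ⨯ Y0), RegEpi e ∧ Mono m ∧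
    e ≫ m = prod.lift y₁ y₂ ∧ IsEquivRelPair (m ≫ prod.fst) (m ≫ prod.snd)

/-- An equality for a weak limit, relative to the comparison arrow `c : V0 ⟶ L` into
the actual limit: a pseudo equivalence relation `v₁, v₂ : V1 ⇉ V0` in `P` such that
`c` is a coequaliser of `v₁, v₂` and `V1` regularly covers the kernel pair of `c`. -/
structure IsEqualityFor (P : Set E) {V1 V0 L : E} (c : V0 ⟶ L) (v₁ v₂ : V1 ⟶ V0) :
    Prop where
  mem : V1 ∈ P
  per : IsPseudoEquivRel v₁ v₂
  w : v₁ ≫ c = v₂ ≫ c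
  coeq : Nonempty (IsColimit (Cofork.ofπ c w))
  cover : RegEpi (pullback.lift v₁ v₂ w)

/-- An arrow `e : V ⟶ Z0` out of a weak product with projections `p, q` preserves
projections with respect to a pseudo equivalence relation `z₁, z₂ : Z1 ⇉ Z0` if for
any equality `v₁, v₂ : V1 ⇉ V` for the weak product there is `t : V1 ⟶ Z1` with
`t ≫ zᵢ = vᵢ ≫ e`. -/
def PreservesProjWP (P : Set E) {V X Y Z1 Z0 : E} (p : V ⟶ X) (q : V ⟶ Y)
    (z₁ z₂ : Z1 ⟶ Z0) (e : V ⟶ Z0) : Prop :=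
  ∀ ⦃V1 : E⦄ (v₁ v₂ : V1 ⟶ V), IsEqualityFor P (prod.lift p q) v₁ v₂ →
    ∃ t : V1 ⟶ Z1, t ≫ z₁ = v₁ ≫ e ∧ t ≫ z₂ = v₂ ≫ e

/-- A candidate diagram for a generalised weak simple product of `f` and `g` with
respect to the pseudo equivalence relation `y₁, y₂`. -/
structure GWSPCone (P : Set E) {Y1 Y0 J X : E} (y₁ y₂ : Y1 ⟶ Y0) (f : Y0 ⟶ J)
    (g : Y0 ⟶ X) (W V : E) (w : W ⟶ J) (p : V ⟶ W) (q : V ⟶ X) (e : V ⟶ Y0) :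
    Prop where
  memW : W ∈ P
  wp : IsWeakProduct P p q
  pres : PreservesProjWP P p q y₁ y₂ e
  comm₁ : p ≫ w = e ≫ f
  comm₂ : q = e ≫ g

/-- A generalised weak simple product: a weakly terminal candidate diagram. -/
structure IsGWSP (P : Set E) {Y1 Y0 J X : E} (y₁ y₂ : Y1 ⟶ Y0) (f : Y0 ⟶ J)
    (g : Y0 ⟶ X) (W V : E) (w : W ⟶ J) (p : V ⟶ W) (q : V ⟶ X) (e : V ⟶ Y0) :
    Prop where
  cone : GWSPCone P y₁ y₂ f g W V w p q e
  lift : ∀ ⦃W' V' : E⦄ (w' : W' ⟶ J) (p' : V' ⟶ W') (q' : V' ⟶ X) (e' : V' ⟶ Y0),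
    GWSPCone P y₁ y₂ f g W' V' w' p' q' e' →
    ∃ (α : W' ⟶ W) (β : V' ⟶ V),
      α ≫ w = w' ∧ β ≫ p = p' ≫ α ∧ β ≫ q = q' ∧ β ≫ e = e'

/-- `P` has generalised weak simple products. -/
def HasGWSP (P : Set E) : Prop :=
  ∀ ⦃Y1 Y0 J X : E⦄, Y1 ∈ P → Y0 ∈ P → J ∈ P → X ∈ P →
    ∀ (y₁ y₂ : Y1 ⟶ Y0), IsPseudoEquivRel y₁ y₂ →
    ∀ (f : Y0 ⟶ J) (g : Y0 ⟶ X), y₁ ≫ f = y₂ ≫ f → y₁ ≫ g = y₂ ≫ g →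
    ∃ (W V : E) (w : W ⟶ J) (p : V ⟶ W) (q : V ⟶ X) (e : V ⟶ Y0),
      IsGWSP P y₁ y₂ f g W V w p q e

/-- A candidate diagram for a generalised weak exponential of `X` and `y₁, y₂`. -/
structure GWExpCone (P : Set E) {X Y1 Y0 : E} (y₁ y₂ : Y1 ⟶ Y0)
    (W V : E) (p : V ⟶ W) (q : V ⟶ X) (e : V ⟶ Y0) : Prop where
  memW : W ∈ P
  wp : IsWeakProduct P p q
  pres : PreservesProjWP P p q y₁ y₂ e

/-- A generalised weak exponential of `X` and a pseudo equivalence relation. -/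
structure IsGWExp (P : Set E) {X Y1 Y0 : E} (y₁ y₂ : Y1 ⟶ Y0)
    (W V : E) (p : V ⟶ W) (q : V ⟶ X) (e : V ⟶ Y0) : Prop where
  cone : GWExpCone P y₁ y₂ W V p q e
  lift : ∀ ⦃W' V' : E⦄ (p' : V' ⟶ W') (q' : V' ⟶ X) (e' : V' ⟶ Y0),
    GWExpCone P y₁ y₂ W' V' p' q' e' →
    ∃ (α : W' ⟶ W) (β : V' ⟶ V), β ≫ p = p' ≫ α ∧ β ≫ q = q' ∧ β ≫ e = e'

/-! ## Weak pullbacks and generalised weak dependent products -/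

/-- A weak pullback in `P` of the cospan `X →f J ←w W`. -/
structure IsWeakPullback (P : Set E) {X J W V : E} (f : X ⟶ J) (w : W ⟶ J)
    (a : V ⟶ X) (b : V ⟶ W) : Prop where
  mem : V ∈ P
  comm : a ≫ f = b ≫ w
  lift : ∀ ⦃V' : E⦄, V' ∈ P → ∀ (a' : V' ⟶ X) (b' : V' ⟶ W), a' ≫ f = b' ≫ w →
    ∃ h : V' ⟶ V, h ≫ a = a' ∧ h ≫ b = b'

/-- Preservation of projections for an arrow out of a weak pullback. -/
def PreservesProjWPB (P : Set E) {V X J W Z1 Z0 : E} (f : X ⟶ J) (w : W ⟶ J)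
    (a : V ⟶ X) (b : V ⟶ W) (h : a ≫ f = b ≫ w) (z₁ z₂ : Z1 ⟶ Z0) (e : V ⟶ Z0) :
    Prop :=
  ∀ ⦃V1 : E⦄ (v₁ v₂ : V1 ⟶ V), IsEqualityFor P (pullback.lift a b h) v₁ v₂ →
    ∃ t : V1 ⟶ Z1, t ≫ z₁ = v₁ ≫ e ∧ t ≫ z₂ = v₂ ≫ e

/-- A candidate diagram for a generalised weak dependent product of `g : Y0 ⟶ X`
along `f : X ⟶ J` with respect to `y₁, y₂`. -/
structure GWDPCone (P : Set E) {Y1 Y0 X J : E} (y₁ y₂ : Y1 ⟶ Y0) (g : Y0 ⟶ X)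
    (f : X ⟶ J) (W V : E) (w : W ⟶ J) (a : V ⟶ X) (b : V ⟶ W) (e : V ⟶ Y0) :
    Prop where
  memW : W ∈ P
  comm : a ≫ f = b ≫ w
  wpb : IsWeakPullback P f w a b
  overX : e ≫ g = a
  pres : PreservesProjWPB P f w a b comm y₁ y₂ e

/-- A generalised weak dependent product: a weakly terminal candidate diagram. -/
structure IsGWDP (P : Set E) {Y1 Y0 X J : E} (y₁ y₂ : Y1 ⟶ Y0) (g : Y0 ⟶ X)
    (f : X ⟶ J) (W V : E) (w : W ⟶ J) (a : V ⟶ X) (b : V ⟶ W) (e : V ⟶ Y0) :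
    Prop where
  cone : GWDPCone P y₁ y₂ g f W V w a b e
  lift : ∀ ⦃W' V' : E⦄ (w' : W' ⟶ J) (a' : V' ⟶ X) (b' : V' ⟶ W') (e' : V' ⟶ Y0),
    GWDPCone P y₁ y₂ g f W' V' w' a' b' e' →
    ∃ (α : W' ⟶ W) (β : V' ⟶ V),
      α ≫ w = w' ∧ β ≫ a = a' ∧ β ≫ b = b' ≫ α ∧ β ≫ e = e'

/-- `P` has generalised weak dependent products (i.e. `P` is weakly locally cartesian
closed). -/
def HasGWDP (P : Set E) : Prop :=
  ∀ ⦃Y1 Y0 X J : E⦄, Y1 ∈ P → Y0 ∈ P → X ∈ P → J ∈ P →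
    ∀ (y₁ y₂ : Y1 ⟶ Y0), IsPseudoEquivRel y₁ y₂ →
    ∀ (g : Y0 ⟶ X) (f : X ⟶ J), y₁ ≫ g = y₂ ≫ g →
    ∃ (W V : E) (w : W ⟶ J) (a : V ⟶ X) (b : V ⟶ W) (e : V ⟶ Y0),
      IsGWDP P y₁ y₂ g f W V w a b e

/-! ## The functor `w_X` on subobjects induced by weak simple products -/

/-- The adjunction property of the weak-simple-product operation `w_X` on subobjects:
for every subobject `a : A ↪ J ⨯ X`, every `P`-cover `Y ↠ A`, every weak simple
product `W → J` of the induced span and every image factorisation `W ↠ I ↪ J` of it,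
the subobject `I ↪ J` is a value at `a` of a right adjoint to
`(−) ⨯ X : Sub(J) → Sub(J ⨯ X)`. -/
def WAdj (P : Set E) (J X : E) : Prop :=
  ∀ ⦃A : E⦄ (a : A ⟶ J ⨯ X), Mono a →
  ∀ ⦃Y : E⦄, Y ∈ P → ∀ (c : Y ⟶ A), RegEpi c →
  ∀ ⦃W V : E⦄ (w : W ⟶ J) (p : V ⟶ W) (q : V ⟶ X) (e : V ⟶ Y),
    IsWeakSimpleProduct P (c ≫ a ≫ prod.fst) (c ≫ a ≫ prod.snd) W V w p q e →
  ∀ ⦃I : E⦄ (ew : W ⟶ I) (m : I ⟶ J), RegEpi ew → Mono m → ew ≫ m = w →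
  ∀ ⦃B : E⦄ (b : B ⟶ J), Mono b →
    ((∃ t : B ⨯ X ⟶ A, t ≫ a = prod.map b (𝟙 X)) ↔ ∃ s : B ⟶ I, s ≫ m = b)

/-! ## Weak dependent products (à la Carboni–Rosolini) -/

/-- `P` has weak dependent products: for `f : X ⟶ J` and `g : Y ⟶ X` in `P` there are
`w : W ⟶ J` in `P` and a surjection `Hom_{P/J}(h, w) → Hom_{P/X}(f*(h), g)` natural
in `h ∈ P/J`. -/
def HasWeakDependentProducts (P : Set E) : Prop :=
  ∀ ⦃X J Y : E⦄, X ∈ P → J ∈ P → Y ∈ P → ∀ (f : X ⟶ J) (g : Y ⟶ X),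
    ∃ (W : E) (_ : W ∈ P) (w : W ⟶ J)
      (ε : ∀ ⦃T : E⦄, T ∈ P → ∀ (h : T ⟶ J) (k : T ⟶ W), k ≫ w = h →
        (pullback h f ⟶ Y)),
      (∀ ⦃T : E⦄ (hT : T ∈ P) (h : T ⟶ J) (k : T ⟶ W) (hk : k ≫ w = h),
         ε hT h k hk ≫ g = pullback.snd h f) ∧
      (∀ ⦃T : E⦄ (hT : T ∈ P) (h : T ⟶ J) (d : pullback h f ⟶ Y),
         d ≫ g = pullback.snd h f → ∃ (k : T ⟶ W) (hk : k ≫ w = h), ε hT h k hk = d) ∧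
      (∀ ⦃T' T : E⦄ (hT' : T' ∈ P) (hT : T ∈ P) (u : T' ⟶ T) (h : T ⟶ J) (k : T ⟶ W)
         (hk : k ≫ w = h),
         ε hT' (u ≫ h) (u ≫ k) (by rw [Category.assoc, hk]) =
           pullback.map (u ≫ h) f h f u (𝟙 X) (𝟙 J) (by simp) (by simp) ≫ ε hT h k hk)

end FinLim2

/-!
Factor `⟨f, g⟩ : Y ⟶ J ⨯ X` as a regular epi `Y ↠ A` followed by a mono `A ↪ J ⨯ X`. The
exponential `(−)^X` yields the largest subobject `∀_X A` of `J` whose product with `X` lies in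
`A`; cover it by `W ∈ P` and cover the pullback of `W ⟶ J` along `f` by `V ∈ P`. Evaluating
and lifting along `Y ↠ A` makes `V` a weak product of `W` and `X`. For a competing diagram
`W' ← V' ⟶ X`, covering `W' ⨯ X` and using that regular epis are orthogonal to monos shows
`W' ⨯ X ≤ A`, so `W' ⟶ J` factors through `∀_X A`, and projectivity lifts it to `W`.
-/

section UniversalQuantifier

variable {C D : Type*} [Category C] [Category D] [HasPullbacks C] {F : C ⥤ D} {G : D ⥤ C}
  (adj : F ⊣ G) {J : C} {A : D} (a : A ⟶ F.obj J)

/-- When `a` is mono, this is the largest subobject `U ↪ J` with `F U ≤ A`: the right adjoint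
of pulling subobjects back along `F`. -/
noncomputable def forallObj : C := pullback (adj.unit.app J) (G.map a)

noncomputable def forallπ : forallObj adj a ⟶ J := pullback.fst _ _

noncomputable def forallEval : F.obj (forallObj adj a) ⟶ A :=
  (adj.homEquiv _ _).symm (pullback.snd _ _)

theorem forallEval_comp : forallEval adj a ≫ a = F.map (forallπ adj a) := by
  unfold forallEval forallπ forallObj
  rw [← adj.homEquiv_naturality_right_symm, ← pullback.condition,
    adj.homEquiv_naturality_left_symm, Adjunction.homEquiv_counit]
  simp

theorem exists_lift_forallπ {T : C} (t : T ⟶ J) (s : F.obj T ⟶ A) (h : s ≫ a = F.map t) :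
    ∃ k : T ⟶ forallObj adj a, k ≫ forallπ adj a = t := by
  have hs : t ≫ adj.unit.app J = adj.homEquiv _ _ s ≫ G.map a := by
    rw [← adj.homEquiv_naturality_right, h, Adjunction.homEquiv_unit, adj.unit_naturality]
  exact ⟨pullback.lift t _ hs, pullback.lift_fst _ _ _⟩

end UniversalQuantifier

theorem RegEpi.exists_diagonal {A B C D : E} {c : A ⟶ B} (hc : RegEpi c) {m : C ⟶ D} [Mono m]
    {x : A ⟶ C} {y : B ⟶ D} (h : x ≫ m = c ≫ y) : ∃ d : B ⟶ C, c ≫ d = x ∧ d ≫ m = y := by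
  have := isRegularEpi_of_regularEpi hc.some
  let sq : CommSq x c m y := ⟨h⟩
  exact ⟨sq.lift, sq.fac_left, sq.fac_right⟩

theorem RegProjective.exists_lift_to_pullback_cover [HasPullbacks E] {T V B C D : E}
    (hT : RegProjective T) {f : B ⟶ D} {g : C ⟶ D} {c : V ⟶ pullback f g} (hc : RegEpi c)
    {x : T ⟶ B} {y : T ⟶ C} (h : x ≫ f = y ≫ g) :
    ∃ β : T ⟶ V, β ≫ c ≫ pullback.fst f g = x ∧ β ≫ c ≫ pullback.snd f g = y := by
  obtain ⟨β, hβ⟩ := hT c hc (pullback.lift x y h)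
  exact ⟨β, by rw [reassoc_of% hβ, pullback.lift_fst], by rw [reassoc_of% hβ, pullback.lift_snd]⟩

section PseudoSimpleProduct

variable [HasFiniteLimits E] {P : Set E} {J Y X A : E} {f : Y ⟶ J} {g : Y ⟶ X} {ρ : Y ⟶ A}
  {a : A ⟶ J ⨯ X}

theorem PSPCone.exists_prod_map_factor (hcover : ∀ B : E, ∃ Z ∈ P, ∃ c : Z ⟶ B, RegEpi c)
    [Mono a]
    (hρa : ρ ≫ a = prod.lift f g) {W' V' : E} {w' : W' ⟶ J} {p' : V' ⟶ W'} {q' : V' ⟶ X}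
    {e' : V' ⟶ Y} (hc : PSPCone P f g W' V' w' p' q' e') :
    ∃ d : W' ⨯ X ⟶ A, d ≫ a = prod.map w' (𝟙 X) := by
  obtain ⟨U, hU, c, hc'⟩ := hcover (W' ⨯ X)
  obtain ⟨h, hp, hq⟩ := hc.wp.lift hU (c ≫ prod.fst) (c ≫ prod.snd)
  have hsq : (h ≫ e' ≫ ρ) ≫ a = c ≫ prod.map w' (𝟙 X) := by
    ext
    · simp [hρa, ← hc.comm₁, reassoc_of% hp, prod.lift_fst]
    · simp [hρa, ← hc.comm₂, hq, prod.lift_snd]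
  obtain ⟨d, -, hd⟩ := hc'.exists_diagonal hsq
  exact ⟨d, hd⟩

variable {U : E} {π : U ⟶ J} {W V : E} {cW : W ⟶ U} {cV : V ⟶ pullback (cW ≫ π) f}

theorem isWeakProduct_of_covers (hP : ∀ Z ∈ P, RegProjective Z) (hρ : RegEpi ρ)
    (hρa : ρ ≫ a = prod.lift f g) {ev : U ⨯ X ⟶ A} (hev : ev ≫ a = prod.map π (𝟙 X))
    (hV : V ∈ P) (hcV : RegEpi cV) :
    IsWeakProduct P (cV ≫ pullback.fst _ _) ((cV ≫ pullback.snd _ _) ≫ g) := by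
  refine ⟨hV, fun V' hV' p' q' => ?_⟩
  obtain ⟨y, hy⟩ := hP V' hV' ρ hρ (prod.lift (p' ≫ cW) q' ≫ ev)
  have hya : y ≫ prod.lift f g = prod.lift (p' ≫ cW ≫ π) q' := by
    rw [← hρa, reassoc_of% hy, hev, prod.lift_map, Category.comp_id, Category.assoc]
  have hyf : p' ≫ cW ≫ π = y ≫ f := by simpa [prod.lift_fst] using (hya =≫ prod.fst).symm
  have hyg : y ≫ g = q' := by simpa [prod.lift_snd] using hya =≫ prod.snd
  obtain ⟨β, hβp, hβe⟩ := (hP V' hV').exists_lift_to_pullback_cover hcV hyf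
  exact ⟨β, hβp, by rw [← Category.assoc β, hβe, hyg]⟩

theorem PSPCone.exists_lift_to_covers (hP : IsProjectiveCover P) [Mono a]
    (hρa : ρ ≫ a = prod.lift f g)
    (hπ : ∀ ⦃T : E⦄ (t : T ⟶ J) (s : T ⨯ X ⟶ A), s ≫ a = prod.map t (𝟙 X) →
      ∃ k : T ⟶ U, k ≫ π = t)
    (hcW : RegEpi cW) (hcV : RegEpi cV) {W' V' : E}
    {w' : W' ⟶ J} {p' : V' ⟶ W'} {q' : V' ⟶ X} {e' : V' ⟶ Y}
    (hc : PSPCone P f g W' V' w' p' q' e') :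
    ∃ (α : W' ⟶ W) (β : V' ⟶ V), α ≫ cW ≫ π = w' ∧
      β ≫ cV ≫ pullback.fst _ _ = p' ≫ α ∧ β ≫ (cV ≫ pullback.snd _ _) ≫ g = q' ∧
      β ≫ cV ≫ pullback.snd _ _ = e' := by
  obtain ⟨d, hd⟩ := hc.exists_prod_map_factor hP.2 hρa
  obtain ⟨k, hk⟩ := hπ w' d hd
  obtain ⟨α, hα⟩ := hP.1 W' hc.memW cW hcW k
  have hαw : α ≫ cW ≫ π = w' := by rw [reassoc_of% hα, hk]
  obtain ⟨β, hβp, hβe⟩ := (hP.1 V' hc.wp.mem).exists_lift_to_pullback_cover hcV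
    (x := p' ≫ α) (by rw [Category.assoc, hαw, hc.comm₁])
  exact ⟨α, β, hαw, hβp, by rw [← Category.assoc β, hβe, hc.comm₂], hβe⟩

end PseudoSimpleProduct

/-- If `E` is cartesian closed, then any projective cover `P` has pseudo
simple products. -/
theorem stmt8 {E : Type u} [Category.{v} E] [HasFiniteLimits E]
    (hE : IsExact E) (P : Set E) (hP : IsProjectiveCover P)
    (hcc : CartesianClosedP E) :
    HasPseudoSimpleProducts P := by
  intro J Y X _ _ _ f g
  obtain ⟨A, ρ, a, hρ, ha, hρa⟩ := hE.factor (prod.lift f g)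
  have := hcc X
  let adj := Adjunction.ofIsLeftAdjoint (prod.functor.flip.obj X)
  obtain ⟨W, hW, cW, hcW⟩ := hP.2 (forallObj adj a)
  obtain ⟨V, hV, cV, hcV⟩ := hP.2 (pullback (cW ≫ forallπ adj a) f)
  refine ⟨W, V, cW ≫ forallπ adj a, cV ≫ pullback.fst _ _, (cV ≫ pullback.snd _ _) ≫ g,
    cV ≫ pullback.snd _ _, ⟨⟨hW, ?_, by simp [pullback.condition], rfl⟩, ?_⟩⟩
  · exact isWeakProduct_of_covers hP.1 hρ hρa (forallEval_comp adj a) hV hcV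
  · exact fun W' V' w' p' q' e' hc =>
      hc.exists_lift_to_covers hP hρa (fun _ => exists_lift_forallπ adj a) hcW hcV

end ExComp
end

section
/- Let E be an exact category with enough projectives and P a projective cover of E. If P has pseudo simple products, then for all objects I, A of E the inverse image functor along the product projection, (−) × A : Sub(I) → Sub(I × A) (pullback of subobjects along the projection I × A → I), has a right adjoint. -/
open CategoryTheory Limits

namespace ExComp

universe v u

variable {E : Type u} [Category.{v} E]

/-! The right adjoint sends `S ↪ I ⨯ A` to the image of `W ⟶ J ⟶ I`, where `J ↠ I` and
`X ↠ A` are covers from `P`, `Y ∈ P` weakly covers the pullback of `S` along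
`J ⨯ X ⟶ I ⨯ A`, and `W ⟶ J` is a pseudo simple product of the span `J ← Y → X`.
Since both sides of the adjunction are inequalities of subobjects, they can be tested on
generalised elements from `P`: such an element of `I` lies in the image exactly when it lifts
to `W`, and the weak universal property of the pseudo simple product says precisely that this
happens when the element times `A` lands in `S`. -/

section PseudoSimpleProducts
variable {E : Type u} [Category.{v} E] {P : Set E}

theorem IsProjectiveCover.le_of_factors (hP : IsProjectiveCover P) {X : E}
    {U S : Subobject X} (h : ∀ Z ∈ P, ∀ z : Z ⟶ X, U.Factors z → S.Factors z) : U ≤ S := by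
  obtain ⟨Z, hZ, d, ⟨hd⟩⟩ := hP.2 U
  have : IsRegularEpi d := ⟨⟨hd⟩⟩
  have hS := h Z hZ (d ≫ U.arrow) (Subobject.factors_comp_arrow d)
  have sq : CommSq (S.factorThru _ hS) d S.arrow U.arrow := ⟨S.factorThru_arrow _ hS⟩
  exact Subobject.le_of_comm sq.lift sq.fac_right

theorem IsProjectiveCover.exists_isWeakPullback [HasPullbacks E] (hP : IsProjectiveCover P)
    {X J W : E} (f : X ⟶ J) (g : W ⟶ J) :
    ∃ (V : E) (a : V ⟶ X) (b : V ⟶ W), IsWeakPullback P f g a b := by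
  obtain ⟨V, hV, d, hd⟩ := hP.2 (pullback f g)
  refine ⟨V, d ≫ pullback.fst f g, d ≫ pullback.snd f g,
    ⟨hV, by simp [pullback.condition], fun V' hV' a' b' h => ?_⟩⟩
  obtain ⟨l, hl⟩ := hP.1 V' hV' d hd (pullback.lift a' b' h)
  exact ⟨l, by simp [reassoc_of% hl, pullback.lift_fst],
    by simp [reassoc_of% hl, pullback.lift_snd]⟩

variable [HasBinaryProducts E] {I A J X : E} {pI : J ⟶ I} {pA : X ⟶ A}
  {S : Subobject (I ⨯ A)} {Y : E} {c : Y ⟶ S} {k : Y ⟶ J ⨯ X}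
  {W V : E} {w : W ⟶ J} {p : V ⟶ W} {q : V ⟶ X} {e : V ⟶ Y}

theorem PSPCone.factors_of_fst_lifts (hW : PSPCone P (k ≫ prod.fst) (k ≫ prod.snd) W V w p q e)
    (hP : IsProjectiveCover P) (hpA : RegEpi pA)
    (hY : IsWeakPullback P S.arrow (prod.map pI pA) c k)
    {Z : E} (hZ : Z ∈ P) (x : Z ⟶ I ⨯ A) (t : Z ⟶ W) (ht : t ≫ w ≫ pI = x ≫ prod.fst) :
    S.Factors x := by
  obtain ⟨u, hu⟩ := hP.1 Z hZ pA hpA (x ≫ prod.snd)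
  obtain ⟨h, hp, hq⟩ := hW.wp.lift hZ t u
  refine (Subobject.factors_iff _ _).mpr ⟨h ≫ e ≫ c, ?_⟩
  have hk : h ≫ e ≫ k = prod.lift (t ≫ w) u := by
    apply prod.hom_ext
    · simp [← hW.comm₁, reassoc_of% hp, prod.lift_fst]
    · simp [← hW.comm₂, hq, prod.lift_snd]
  calc (h ≫ e ≫ c) ≫ S.arrow = (h ≫ e ≫ k) ≫ prod.map pI pA := by simp [hY.comm]
    _ = x := by rw [hk]; apply prod.hom_ext <;> simp [ht, hu, prod.lift_fst, prod.lift_snd]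

theorem IsPseudoSimpleProduct.exists_lift_of_pullback_fst_le [HasPullbacks E]
    (hW : IsPseudoSimpleProduct P (k ≫ prod.fst) (k ≫ prod.snd) W V w p q e)
    (hP : IsProjectiveCover P) (hpI : RegEpi pI)
    (hY : IsWeakPullback P S.arrow (prod.map pI pA) c k)
    {T : Subobject I} (hTS : (Subobject.pullback prod.fst).obj T ≤ S)
    {Z : E} (hZ : Z ∈ P) (z : Z ⟶ I) (hz : T.Factors z) :
    ∃ t : Z ⟶ W, t ≫ w ≫ pI = z := by
  obtain ⟨w', hw'⟩ := hP.1 Z hZ pI hpI z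
  obtain ⟨V', p', e', hV'⟩ := hP.exists_isWeakPullback w' (k ≫ prod.fst)
  -- Every `P`-element of `Z ⨯ X` lies over `T ⨯ A ≤ S`, hence lifts to `Y` and then to `V'`.
  have cone : PSPCone P (k ≫ prod.fst) (k ≫ prod.snd) Z V' w' p' (e' ≫ k ≫ prod.snd) e' := by
    refine ⟨hZ, ⟨hV'.mem, fun V'' hV'' u v => ?_⟩, hV'.comm, rfl⟩
    have hS : S.Factors (prod.lift (u ≫ w') v ≫ prod.map pI pA) := by
      refine Subobject.factors_of_le _ hTS ((pullback_factors_iff _ _ _).mpr ?_)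
      simpa [hw', prod.lift_fst] using Subobject.factors_of_factors_right u hz
    obtain ⟨σ, hσ⟩ := (Subobject.factors_iff _ _).mp hS
    obtain ⟨y, -, hy⟩ := hY.lift hV'' σ (prod.lift (u ≫ w') v) hσ
    obtain ⟨h, hp', he'⟩ := hV'.lift hV'' u y (by rw [reassoc_of% hy, prod.lift_fst])
    exact ⟨h, hp', by rw [reassoc_of% he', reassoc_of% hy, prod.lift_snd]⟩
  obtain ⟨α, -, hα, -, -, -⟩ := hW.lift w' p' (e' ≫ k ≫ prod.snd) e' cone
  exact ⟨α, by rw [reassoc_of% hα, hw']⟩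

end PseudoSimpleProducts

theorem exists_pullback_fst_le_iff {E : Type u} [Category.{v} E] [HasFiniteLimits E]
    (hE : IsExact E) {P : Set E} (hP : IsProjectiveCover P)
    (hpsp : HasPseudoSimpleProducts P) (I A : E) (S : Subobject (I ⨯ A)) :
    ∃ R : Subobject I, ∀ T : Subobject I,
      (Subobject.pullback prod.fst).obj T ≤ S ↔ T ≤ R := by
  obtain ⟨J, hJ, pI, hpI⟩ := hP.2 I
  obtain ⟨X, hX, pA, hpA⟩ := hP.2 A
  obtain ⟨Y, c, k, hY⟩ := hP.exists_isWeakPullback S.arrow (prod.map pI pA)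
  obtain ⟨W, V, w, p, q, e, hW⟩ := hpsp hJ hY.mem hX (k ≫ prod.fst) (k ≫ prod.snd)
  obtain ⟨R, ew, m, hew, hm, hfac⟩ := hE.factor (w ≫ pI)
  refine ⟨Subobject.mk m, fun T => ⟨fun hTS => hP.le_of_factors fun Z hZ z hz => ?_,
    fun hTR => hP.le_of_factors fun Z hZ x hx => ?_⟩⟩
  · obtain ⟨t, ht⟩ := hW.exists_lift_of_pullback_fst_le hP hpI hY hTS hZ z hz
    have := Subobject.factors_of_factors_right (t ≫ ew) (Subobject.mk_factors_self m)
    rwa [Category.assoc, hfac, ht] at this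
  · rw [pullback_factors_iff] at hx
    obtain ⟨r, hr : r ≫ m = _⟩ := (Subobject.mk_factors_iff _ _).mp (Subobject.factors_of_le _ hTR hx)
    obtain ⟨t, ht⟩ := hP.1 Z hZ ew hew r
    exact hW.cone.factors_of_fst_lifts hP hpA hY hZ x t
      (by rw [← hfac, ← Category.assoc, ht]; exact hr)

/-- If `P` has pseudo simple products, then for all `I, A` the inverse
image functor along the product projection, `Sub(I) ⥤ Sub(I ⨯ A)`, has a right
adjoint. -/
theorem stmt9 {E : Type u} [Category.{v} E] [HasFiniteLimits E]
    (hE : IsExact E) (P : Set E) (hP : IsProjectiveCover P)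
    (hpsp : HasPseudoSimpleProducts P) (I A : E) :
    (Subobject.pullback (prod.fst : I ⨯ A ⟶ I)).IsLeftAdjoint := by
  choose r hr using exists_pullback_fst_le_iff hE hP hpsp I A
  have gc : GaloisConnection (Subobject.pullback (prod.fst : I ⨯ A ⟶ I)).obj r :=
    fun T S => hr S T
  have : gc.monotone_l.functor.IsLeftAdjoint := ⟨_, ⟨gc.adjunction⟩⟩
  exact Functor.isLeftAdjoint_of_iso (F := gc.monotone_l.functor)
    (NatIso.ofComponents fun _ => Iso.refl _)

end ExComp
end

section
/- Let E be an exact category with enough projectives and P a projective cover of E. If P has weak exponentials and pseudo simple products, then E has exponentials of projectives: for all objects X, Y of P there exist an object W of E and a morphism e : W × X → Y such that for every object C of E and every morphism f : C × X → Y there is a unique g : C → W with e ∘ (g × id_X) = f. -/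
open CategoryTheory Limits

namespace ExComp

universe v u

variable {E : Type u} [Category.{v} E]

/-!
The weak exponential `W₀` of `X` and `Y`, with the evaluation it induces on `W₀ ⨯ X`, is a
quasi-exponential: arrows `Z ⨯ X ⟶ Y` with `Z` projective have transposes `Z ⟶ W₀`, but not
unique ones. Pseudo simple products give universal quantification along `(−) ⨯ X` on subobjects
(the image of the pseudo simple product of a projective cover of the subobject); applied to the
equaliser of the two evaluations on `(W₀ ⨯ W₀) ⨯ X`, it yields the subobject of pairs with equal
transposes. This is an equivalence relation, and its quotient `Q` in the exact category `E`,
with the evaluation it inherits, is the exponential: transposes into `Q` are unique, and they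
exist for every source because they exist for a projective cover of it.
-/

attribute [local simp] prod.lift_fst prod.lift_snd prod.lift_fst_assoc prod.lift_snd_assoc

namespace RegEpi

variable {A B C : E} {f : A ⟶ B}

lemma isRegularEpi (hf : RegEpi f) : IsRegularEpi f := ⟨hf⟩

lemma strongEpi (hf : RegEpi f) : StrongEpi f :=
  have := hf.isRegularEpi
  inferInstance

lemma epi (hf : RegEpi f) : Epi f := hf.strongEpi.epi

lemma exists_desc (hf : RegEpi f) (g : A ⟶ C)
    (hg : ∀ ⦃T : E⦄ (h k : T ⟶ A), h ≫ f = k ≫ f → h ≫ g = k ≫ g) :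
    ∃ l : B ⟶ C, f ≫ l = g :=
  have := hf.isRegularEpi
  ⟨EffectiveEpi.desc f g fun h k => hg h k, EffectiveEpi.fac f g _⟩

end RegEpi

lemma exists_comp_eq_of_strongEpi {T A M B : E} {z : T ⟶ A} [StrongEpi z] {m : M ⟶ B}
    [Mono m] {b : A ⟶ B} {s : T ⟶ M} (h : s ≫ m = z ≫ b) : ∃ d : A ⟶ M, d ≫ m = b :=
  ⟨(CommSq.mk h).lift, CommSq.fac_right _⟩

lemma exists_comp_equalizer_ι_iff {T A B : E} {f g : A ⟶ B} [HasEqualizer f g] (x : T ⟶ A) :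
    (∃ u : T ⟶ equalizer f g, u ≫ equalizer.ι f g = x) ↔ x ≫ f = x ≫ g :=
  ⟨fun ⟨u, hu⟩ => by rw [← hu, Category.assoc, Category.assoc, equalizer.condition],
    fun h => ⟨equalizer.lift x h, equalizer.lift_ι x h⟩⟩

lemma isEquivRelPair_of_forall_iff {W R : E} [HasBinaryProduct W W] (m : R ⟶ W ⨯ W) [Mono m]
    {S : E → Sort*} (F : ∀ T : E, (T ⟶ W) → S T)
    (hm : ∀ ⦃T : E⦄ (b : T ⟶ W ⨯ W),
      (∃ t : T ⟶ R, t ≫ m = b) ↔ F T (b ≫ prod.fst) = F T (b ≫ prod.snd)) :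
    IsEquivRelPair (m ≫ prod.fst) (m ≫ prod.snd) := by
  have hrel : ∀ ⦃T : E⦄ (t : T ⟶ R), F T (t ≫ m ≫ prod.fst) = F T (t ≫ m ≫ prod.snd) :=
    fun T t => by simpa using (hm (t ≫ m)).1 ⟨t, rfl⟩
  refine ⟨fun T h k h₁ h₂ => ?_, ?_, ?_, fun T t t' htt' => ?_⟩
  · rw [← cancel_mono m]
    ext <;> simpa
  · obtain ⟨d, hd⟩ := (hm (prod.lift (𝟙 W) (𝟙 W))).2 (by simp)
    exact ⟨d, by simp [reassoc_of% hd], by simp [reassoc_of% hd]⟩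
  · obtain ⟨s, hs⟩ := (hm (prod.lift (m ≫ prod.snd) (m ≫ prod.fst))).2
      (by simpa using (hrel (𝟙 R)).symm)
    exact ⟨s, by simp [reassoc_of% hs], by simp [reassoc_of% hs]⟩
  · obtain ⟨u, hu⟩ := (hm (prod.lift (t ≫ m ≫ prod.fst) (t' ≫ m ≫ prod.snd))).2
      (by simp [hrel t, htt', hrel t'])
    exact ⟨u, by simp [reassoc_of% hu], by simp [reassoc_of% hu]⟩

namespace IsExact

variable [HasFiniteLimits E]

lemma regEpi_of_strongEpi (hE : IsExact E) {A B : E} {f : A ⟶ B} [StrongEpi f] :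
    RegEpi f := by
  obtain ⟨I, e, m, he, hm, rfl⟩ := hE.factor f
  have := strongEpi_of_strongEpi e m
  have := isIso_of_mono_of_strongEpi m
  exact (MorphismProperty.RespectsIso.postcomp (MorphismProperty.regularEpi E) m e
    he.isRegularEpi).regularEpi

lemma regEpi_comp (hE : IsExact E) {A B C : E} {f : A ⟶ B} {g : B ⟶ C}
    (hf : RegEpi f) (hg : RegEpi g) : RegEpi (f ≫ g) :=
  have := hf.strongEpi
  have := hg.strongEpi
  hE.regEpi_of_strongEpi

lemma regEpi_prodMap (hE : IsExact E) {A B : E} {f : A ⟶ B} (hf : RegEpi f) (X : E) :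
    RegEpi (prod.map f (𝟙 X)) := by
  rw [← (IsPullback.of_prod_fst_with_id f X).isoPullback_hom_snd]
  exact (MorphismProperty.RespectsIso.precomp (MorphismProperty.regularEpi E) _ _
    (hE.stable f prod.fst hf).isRegularEpi).regularEpi

end IsExact

section

variable [HasFiniteLimits E] {P : Set E}

lemma isWeakProduct_of_regEpi (hP : IsProjectiveCover P) {T A B : E} (hT : T ∈ P)
    {t : T ⟶ A ⨯ B} (ht : RegEpi t) : IsWeakProduct P (t ≫ prod.fst) (t ≫ prod.snd) := by
  refine ⟨hT, fun V hV p q => ?_⟩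
  obtain ⟨h, hh⟩ := hP.1 V hV t ht (prod.lift p q)
  exact ⟨h, by simp [reassoc_of% hh], by simp [reassoc_of% hh]⟩

lemma IsWeakProduct.regEpi_lift (hE : IsExact E) (hP : IsProjectiveCover P) {V A B : E}
    {p : V ⟶ A} {q : V ⟶ B} (hpq : IsWeakProduct P p q) : RegEpi (prod.lift p q) := by
  obtain ⟨T, hT, t, ht⟩ := hP.2 (A ⨯ B)
  obtain ⟨h, hp, hq⟩ := hpq.lift hT (t ≫ prod.fst) (t ≫ prod.snd)
  have : StrongEpi (h ≫ prod.lift p q) := by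
    rw [show h ≫ prod.lift p q = t by ext <;> simp [hp, hq]]
    exact ht.strongEpi
  have := strongEpi_of_strongEpi h (prod.lift p q)
  exact hE.regEpi_of_strongEpi

lemma determinedByProjections_lift_comp {V A B Z : E} (p : V ⟶ A) (q : V ⟶ B)
    (g : A ⨯ B ⟶ Z) : DeterminedByProjections P p q (prod.lift p q ≫ g) := by
  intro V' _ h k hp hq
  simp only [prod.comp_lift_assoc, hp, hq]

lemma DeterminedByProjections.comp_eq (hP : IsProjectiveCover P) {V A B Z : E}
    {p : V ⟶ A} {q : V ⟶ B} {f : V ⟶ Z} (hf : DeterminedByProjections P p q f) {T : E}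
    {h k : T ⟶ V} (hhk : h ≫ prod.lift p q = k ≫ prod.lift p q) : h ≫ f = k ≫ f := by
  obtain ⟨T', hT', κ, hκ⟩ := hP.2 T
  have := hκ.epi
  rw [← cancel_epi κ]
  simpa using hf hT' (κ ≫ h) (κ ≫ k) (by simpa using κ ≫= hhk =≫ prod.fst)
    (by simpa using κ ≫= hhk =≫ prod.snd)

lemma IsWeakExponential.exists_isQuasiExponential (hE : IsExact E)
    (hP : IsProjectiveCover P) {X Y W V : E} {p : V ⟶ W} {q : V ⟶ X} {e : V ⟶ Y}
    (he : IsWeakExponential P W V p q e) : ∃ ev : W ⨯ X ⟶ Y, IsQuasiExponential P X W ev := by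
  obtain ⟨ev, hev⟩ := (he.cone.wp.regEpi_lift hE hP).exists_desc e
    fun _ _ _ => he.cone.det.comp_eq hP
  refine ⟨ev, fun Z hZ f => ?_⟩
  obtain ⟨V', hV', v, hv⟩ := hP.2 (Z ⨯ X)
  obtain ⟨α, β, hp, hq, he'⟩ := he.lift (v ≫ prod.fst) (v ≫ prod.snd) (v ≫ f)
    ⟨hZ, isWeakProduct_of_regEpi hP hV' hv,
      by simpa only [← prod.comp_lift, prod.lift_fst_snd, Category.comp_id] using
        determinedByProjections_lift_comp (P := P) (v ≫ prod.fst) (v ≫ prod.snd) f⟩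
  have := hv.epi
  refine ⟨α, ?_⟩
  rw [← cancel_epi v, ← he', ← hev, ← Category.assoc, ← Category.assoc]
  congr 1
  ext <;> simp [hp, hq]

lemma PSPCone.exists_counit (hE : IsExact E) (hP : IsProjectiveCover P)
    {A' J X Y₀ W V : E} {a' : A' ⟶ J ⨯ X} {c : Y₀ ⟶ A'} {w : W ⟶ J} {p : V ⟶ W}
    {q : V ⟶ X} {e : V ⟶ Y₀}
    (hcone : PSPCone P (c ≫ a' ≫ prod.fst) (c ≫ a' ≫ prod.snd) W V w p q e)
    {A B I : E} {a : A ⟶ B ⨯ X} [Mono a] {j : J ⟶ B} {k : A' ⟶ A}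
    (hk : k ≫ a = a' ≫ prod.map j (𝟙 X)) {ew : W ⟶ I} (hew : RegEpi ew) {m : I ⟶ B}
    (hm : ew ≫ m = w ≫ j) : ∃ τ : I ⨯ X ⟶ A, τ ≫ a = prod.map m (𝟙 X) := by
  have := (hE.regEpi_comp (hcone.wp.regEpi_lift hE hP) (hE.regEpi_prodMap hew X)).strongEpi
  have hca : e ≫ c ≫ a' = prod.lift p q ≫ prod.map w (𝟙 X) := by
    ext <;> simp [hcone.comm₁, hcone.comm₂]
  refine exists_comp_eq_of_strongEpi (z := prod.lift p q ≫ prod.map ew (𝟙 X))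
    (s := e ≫ c ≫ k) ?_
  simp [hk, reassoc_of% hca, ← hm]

lemma IsPseudoSimpleProduct.exists_comp_eq (hP : IsProjectiveCover P)
    {A' J X Y₀ W V : E} {a' : A' ⟶ J ⨯ X} {c : Y₀ ⟶ A'} (hc : RegEpi c) {w : W ⟶ J}
    {p : V ⟶ W} {q : V ⟶ X} {e : V ⟶ Y₀}
    (hpsp : IsPseudoSimpleProduct P (c ≫ a' ≫ prod.fst) (c ≫ a' ≫ prod.snd) W V w p q e)
    {Z : E} (hZ : Z ∈ P) (h : Z ⟶ J) {u : Z ⨯ X ⟶ A'} (hu : u ≫ a' = prod.map h (𝟙 X)) :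
    ∃ α : Z ⟶ W, α ≫ w = h := by
  obtain ⟨V', hV', v, hv⟩ := hP.2 (Z ⨯ X)
  obtain ⟨e', he'⟩ := hP.1 V' hV' c hc (v ≫ u)
  have hca : e' ≫ c ≫ a' = v ≫ prod.map h (𝟙 X) := by rw [reassoc_of% he', hu]
  obtain ⟨α, -, hα, -⟩ := hpsp.lift h (v ≫ prod.fst) (v ≫ prod.snd) e'
    ⟨hZ, isWeakProduct_of_regEpi hP hV' hv, by simp [reassoc_of% hca],
      by simp [reassoc_of% hca]⟩
  exact ⟨α, hα⟩

lemma exists_universal_quantification (hE : IsExact E) (hP : IsProjectiveCover P)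
    (hpsp : HasPseudoSimpleProducts P) {X : E} (hX : X ∈ P) {A B : E} (a : A ⟶ B ⨯ X)
    [Mono a] : ∃ (I : E) (m : I ⟶ B), Mono m ∧ ∀ ⦃T : E⦄ (b : T ⟶ B),
      (∃ u : T ⨯ X ⟶ A, u ≫ a = prod.map b (𝟙 X)) ↔ ∃ s : T ⟶ I, s ≫ m = b := by
  obtain ⟨J, hJ, j, hj⟩ := hP.2 B
  obtain ⟨Y₀, hY₀, c, hc⟩ := hP.2 (pullback (prod.map j (𝟙 X)) a)
  obtain ⟨W, V, w, p, q, e, hpsp⟩ := hpsp hJ hY₀ hX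
    (c ≫ pullback.fst _ _ ≫ prod.fst) (c ≫ pullback.fst _ _ ≫ prod.snd)
  obtain ⟨I, ew, m, hew, hm, hfac⟩ := hE.factor (w ≫ j)
  obtain ⟨τ, hτ⟩ := hpsp.cone.exists_counit hE hP pullback.condition.symm hew hfac
  refine ⟨I, m, hm, fun T b => ⟨fun ⟨u, hu⟩ => ?_,
    fun ⟨s, hs⟩ => ⟨prod.map s (𝟙 X) ≫ τ, by simp [hτ, hs]⟩⟩⟩
  obtain ⟨Z, hZ, z, hz⟩ := hP.2 T
  obtain ⟨h, hh⟩ := hP.1 Z hZ j hj (z ≫ b)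
  obtain ⟨α, hα⟩ := hpsp.exists_comp_eq hP hc hZ h
    (pullback.lift_fst (prod.map h (𝟙 X)) (prod.map z (𝟙 X) ≫ u) (by simp [hu, hh]))
  have := hz.strongEpi
  exact exists_comp_eq_of_strongEpi (z := z) (s := α ≫ ew)
    (by rw [Category.assoc, hfac, reassoc_of% hα, hh])

lemma IsExact.exists_regEpi_comp_eq_iff (hE : IsExact E) {W R : E} (m : R ⟶ W ⨯ W)
    [Mono m] {S : E → Sort*} (F : ∀ T : E, (T ⟶ W) → S T)
    (hm : ∀ ⦃T : E⦄ (b : T ⟶ W ⨯ W),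
      (∃ t : T ⟶ R, t ≫ m = b) ↔ F T (b ≫ prod.fst) = F T (b ≫ prod.snd)) :
    ∃ (Q : E) (π : W ⟶ Q), RegEpi π ∧
      ∀ ⦃T : E⦄ (b b' : T ⟶ W), b ≫ π = b' ≫ π ↔ F T b = F T b' := by
  obtain ⟨Q, π, hw, ⟨hπ⟩, hpb⟩ := hE.effective _ _ (isEquivRelPair_of_forall_iff m F hm)
  refine ⟨Q, π, ⟨{ W := R, left := _, right := _, w := hw, isColimit := hπ }⟩,
    fun T b b' => ⟨fun h => ?_, fun h => ?_⟩⟩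
  · simpa [hpb.lift_fst_assoc, hpb.lift_snd_assoc] using
      (hm (hpb.lift b b' h ≫ m)).1 ⟨_, rfl⟩
  · obtain ⟨t, ht⟩ := (hm (prod.lift b b')).2 (by simpa using h)
    simpa [reassoc_of% ht] using t ≫= hw

lemma IsQuasiExponential.of_prodMap_comp {X Y W Q : E} {ev₀ : W ⨯ X ⟶ Y}
    (hq : IsQuasiExponential P X W ev₀) {π : W ⟶ Q} {ev : Q ⨯ X ⟶ Y}
    (hev : prod.map π (𝟙 X) ≫ ev = ev₀) : IsQuasiExponential P X Q ev := fun _ hZ f =>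
  let ⟨g, hg⟩ := hq hZ f
  ⟨g ≫ π, by rw [prod.map_comp_id_assoc, hev, hg]⟩

lemma IsExact.exists_prodMap_comp_eq (hE : IsExact E) {W Q X Y : E} {π : W ⟶ Q}
    (hπ : RegEpi π) (ev₀ : W ⨯ X ⟶ Y)
    (h : ∀ ⦃T : E⦄ (b b' : T ⟶ W), b ≫ π = b' ≫ π →
      prod.map b (𝟙 X) ≫ ev₀ = prod.map b' (𝟙 X) ≫ ev₀) :
    ∃ ev : Q ⨯ X ⟶ Y, prod.map π (𝟙 X) ≫ ev = ev₀ := by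
  refine (hE.regEpi_prodMap hπ X).exists_desc ev₀ fun T x y hxy => ?_
  have hx : x = prod.lift (𝟙 T) (x ≫ prod.snd) ≫ prod.map (x ≫ prod.fst) (𝟙 X) := by
    ext <;> simp
  have hy : y = prod.lift (𝟙 T) (y ≫ prod.snd) ≫ prod.map (y ≫ prod.fst) (𝟙 X) := by
    ext <;> simp
  have hfst : (x ≫ prod.fst) ≫ π = (y ≫ prod.fst) ≫ π := by simpa using hxy =≫ prod.fst
  have hsnd : x ≫ prod.snd = y ≫ prod.snd := by simpa using hxy =≫ prod.snd
  rw [hx, hy, Category.assoc, Category.assoc, h _ _ hfst, hsnd]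

lemma eq_of_prodMap_comp_eq (hP : IsProjectiveCover P) {W Q X Y : E} {π : W ⟶ Q}
    (hπ : RegEpi π) {ev₀ : W ⨯ X ⟶ Y} {ev : Q ⨯ X ⟶ Y} (hev : prod.map π (𝟙 X) ≫ ev = ev₀)
    (hker : ∀ ⦃T : E⦄ (b b' : T ⟶ W),
      prod.map b (𝟙 X) ≫ ev₀ = prod.map b' (𝟙 X) ≫ ev₀ → b ≫ π = b' ≫ π)
    {T : E} {g g' : T ⟶ Q} (h : prod.map g (𝟙 X) ≫ ev = prod.map g' (𝟙 X) ≫ ev) : g = g' := by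
  obtain ⟨Z, hZ, z, hz⟩ := hP.2 T
  obtain ⟨b, hb⟩ := hP.1 Z hZ π hπ (z ≫ g)
  obtain ⟨b', hb'⟩ := hP.1 Z hZ π hπ (z ≫ g')
  have := hz.epi
  rw [← cancel_epi z, ← hb, ← hb']
  refine hker b b' ?_
  rw [← hev, ← prod.map_comp_id_assoc, ← prod.map_comp_id_assoc, hb, hb',
    prod.map_comp_id_assoc, prod.map_comp_id_assoc, h]

lemma existsUnique_of_isQuasiExponential (hE : IsExact E) (hP : IsProjectiveCover P)
    {X Y Q : E} {ev : Q ⨯ X ⟶ Y} (hq : IsQuasiExponential P X Q ev)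
    (hinj : ∀ ⦃T : E⦄ (g g' : T ⟶ Q), prod.map g (𝟙 X) ≫ ev = prod.map g' (𝟙 X) ≫ ev →
      g = g')
    (C : E) (f : C ⨯ X ⟶ Y) : ∃! g : C ⟶ Q, prod.map g (𝟙 X) ≫ ev = f := by
  obtain ⟨Z, hZ, z, hz⟩ := hP.2 C
  obtain ⟨g₀, hg₀⟩ := hq hZ (prod.map z (𝟙 X) ≫ f)
  obtain ⟨g, hg⟩ := hz.exists_desc g₀ fun T h k hhk => hinj _ _ <| by
    rw [prod.map_comp_id_assoc, prod.map_comp_id_assoc, hg₀, ← prod.map_comp_id_assoc,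
      ← prod.map_comp_id_assoc, hhk]
  have hgf : prod.map g (𝟙 X) ≫ ev = f := by
    have := (hE.regEpi_prodMap hz X).epi
    rw [← cancel_epi (prod.map z (𝟙 X)), ← prod.map_comp_id_assoc, hg, hg₀]
  exact ⟨g, hgf, fun g' hg' => hinj _ _ (hg'.trans hgf.symm)⟩

lemma exists_exponential_of_isQuasiExponential (hE : IsExact E) (hP : IsProjectiveCover P)
    (hpsp : HasPseudoSimpleProducts P) {X Y W : E} (hX : X ∈ P) {ev₀ : W ⨯ X ⟶ Y}
    (hq : IsQuasiExponential P X W ev₀) : ∃ (Q : E) (ev : Q ⨯ X ⟶ Y),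
      ∀ (C : E) (f : C ⨯ X ⟶ Y), ∃! g : C ⟶ Q, prod.map g (𝟙 X) ≫ ev = f := by
  obtain ⟨R, m, hm, hR⟩ := exists_universal_quantification hE hP hpsp hX
    (equalizer.ι (prod.map prod.fst (𝟙 X) ≫ ev₀) (prod.map prod.snd (𝟙 X) ≫ ev₀))
  have := hm
  obtain ⟨Q, π, hπ, hker⟩ := hE.exists_regEpi_comp_eq_iff m
    (fun T b => prod.map b (𝟙 X) ≫ ev₀) fun T b => by
      rw [← hR, exists_comp_equalizer_ι_iff, prod.map_comp_id_assoc, prod.map_comp_id_assoc]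
  obtain ⟨ev, hev⟩ := hE.exists_prodMap_comp_eq hπ ev₀ fun T b b' => (hker b b').1
  exact ⟨Q, ev, existsUnique_of_isQuasiExponential hE hP (hq.of_prodMap_comp hev)
    fun T g g' => eq_of_prodMap_comp_eq hP hπ hev fun T b b' => (hker b b').2⟩

end

/-- If `P` has weak exponentials and pseudo simple products, then `E`
has exponentials of projectives. -/
theorem stmt10 {E : Type u} [Category.{v} E] [HasFiniteLimits E]
    (hE : IsExact E) (P : Set E) (hP : IsProjectiveCover P)
    (hwe : HasWeakExponentials P) (hpsp : HasPseudoSimpleProducts P) :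
    ∀ X ∈ P, ∀ Y ∈ P, ∃ (W : E) (e : W ⨯ X ⟶ Y),
      ∀ (C : E) (f : C ⨯ X ⟶ Y), ∃! g : C ⟶ W, prod.map g (𝟙 X) ≫ e = f := by
  intro X hX Y hY
  obtain ⟨W, V, p, q, e, he⟩ := hwe hX hY
  obtain ⟨ev₀, hq⟩ := he.exists_isQuasiExponential hE hP
  exact exists_exponential_of_isQuasiExponential hE hP hpsp hX hq

end ExComp
end

section
/- Let E be an exact category with enough projectives, P a projective cover of E, and X an object of P that is exponentiable in E (the functor (−) × X has a right adjoint (−)^X). The following are equivalent: (1) X is internally projective; (2) for every object B of E and every P-cover Y ↠ B, the induced morphism Y^X → B^X is a regular epimorphism; (3) for every object B of E there exists a P-cover Y ↠ B such that the induced morphism Y^X → B^X is a regular epimorphism. -/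
open CategoryTheory Limits

namespace ExComp

universe v u

variable {E : Type u} [Category.{v} E]

/-!
Transposing along `(−) ⨯ X ⊣ (−)^X`, a square `g ≫ c = (u ⨯ X) ≫ f` is the same as a
square `ĝ ≫ c^X = u ≫ f̂`. So internal projectivity of `X` says that every arrow into `B^X`
lifts through `c^X` after a regular epi. For the identity of `B^X` this gives a regular epi
`U ↠ B^X` factoring through `c^X`, and in an exact category that forces `c^X` to be a
regular epi. Conversely, pulling `f̂ : T ⟶ B^X` back along the regular epi `c^X` of a
projective cover `c : Y ↠ B` solves the lifting problem, since `c` lifts along any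
regular epi onto `B`.
-/

section Exact

variable {E : Type u} [Category.{v} E] [HasFiniteLimits E]

lemma regEpi_of_strongEpi (hE : IsExact E) {A B : E} (f : A ⟶ B) [StrongEpi f] :
    RegEpi f := by
  obtain ⟨I, e, m, ⟨he⟩, hm, rfl⟩ := hE.factor f
  have : IsRegularEpi e := isRegularEpi_of_regularEpi he
  have : StrongEpi m := strongEpi_of_strongEpi e m
  have : IsIso m := isIso_of_mono_of_strongEpi m
  exact (MorphismProperty.RespectsIso.postcomp (.regularEpi E) m e ‹_›).regularEpi

lemma regEpi_of_regEpi_comp (hE : IsExact E) {A B C : E} (v : A ⟶ B) (w : B ⟶ C)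
    (h : RegEpi (v ≫ w)) : RegEpi w := by
  have : IsRegularEpi (v ≫ w) := isRegularEpi_of_regularEpi h.some
  have : StrongEpi w := strongEpi_of_strongEpi v w
  exact regEpi_of_strongEpi hE w

end Exact

section Exponential

variable {E : Type u} [Category.{v} E] [HasFiniteLimits E] {X : E} {expF : E ⥤ E}
  (adj : prod.functor.flip.obj X ⊣ expF)
include adj

lemma homEquiv_comp_map_eq_iff {U T Y B : E} (g : U ⨯ X ⟶ Y) (c : Y ⟶ B) (u : U ⟶ T)
    (f : T ⨯ X ⟶ B) :
    adj.homEquiv U Y g ≫ expF.map c = u ≫ adj.homEquiv T B f ↔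
      g ≫ c = prod.map u (𝟙 X) ≫ f := by
  have hc : adj.homEquiv U Y g ≫ expF.map c = adj.homEquiv U B (g ≫ c) :=
    (adj.homEquiv_naturality_right g c).symm
  have hu : u ≫ adj.homEquiv T B f = adj.homEquiv U B (prod.map u (𝟙 X) ≫ f) :=
    (adj.homEquiv_naturality_left u f).symm
  rw [hc, hu]
  exact (adj.homEquiv U B).apply_eq_iff_eq

lemma regEpi_map_of_internallyProjective (hE : IsExact E) (hX : InternallyProjective X)
    {Y B : E} (c : Y ⟶ B) (hc : RegEpi c) : RegEpi (expF.map c) := by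
  let ε : expF.obj B ⨯ X ⟶ B := (adj.homEquiv _ B).symm (𝟙 _)
  obtain ⟨U, u, g, hu, hg⟩ := hX c hc ε
  have hlift : adj.homEquiv U Y g ≫ expF.map c = u := by
    simpa [ε] using (homEquiv_comp_map_eq_iff adj g c u ε).2 hg
  exact regEpi_of_regEpi_comp hE _ _ (hlift ▸ hu)

lemma internallyProjective_of_forall_exists_regEpi_map (hE : IsExact E)
    (h : ∀ B : E, ∃ (Y : E) (c : Y ⟶ B), RegProjective Y ∧ RegEpi (expF.map c)) :
    InternallyProjective X := by
  intro T A B e he f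
  obtain ⟨Y, c, hY, hc⟩ := h B
  obtain ⟨k, hk⟩ := hY e he c
  let f' := adj.homEquiv T B f
  let g : pullback (expF.map c) f' ⨯ X ⟶ Y := (adj.homEquiv _ Y).symm (pullback.fst _ _)
  have hg : g ≫ c = prod.map (pullback.snd _ _) (𝟙 X) ≫ f := by
    rw [← homEquiv_comp_map_eq_iff adj, Equiv.apply_symm_apply]
    exact pullback.condition
  refine ⟨_, pullback.snd _ _, g ≫ k, hE.stable _ _ hc, ?_⟩
  rw [Category.assoc, hk, hg]

end Exponential

theorem stmt12_general {E : Type u} [Category.{v} E] [HasFiniteLimits E]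
    (hE : IsExact E) (P : Set E) (hP : IsProjectiveCover P)
    (X : E) (expF : E ⥤ E) (adj : prod.functor.flip.obj X ⊣ expF) :
    (InternallyProjective X ↔
       ∀ ⦃B Y : E⦄, Y ∈ P → ∀ (c : Y ⟶ B), RegEpi c → RegEpi (expF.map c)) ∧
    (InternallyProjective X ↔
       ∀ B : E, ∃ Y ∈ P, ∃ c : Y ⟶ B, RegEpi c ∧ RegEpi (expF.map c)) := by
  have h12 : InternallyProjective X →
      ∀ ⦃B Y : E⦄, Y ∈ P → ∀ (c : Y ⟶ B), RegEpi c → RegEpi (expF.map c) :=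
    fun h1 _ _ _ c hc => regEpi_map_of_internallyProjective adj hE h1 c hc
  have h23 : (∀ ⦃B Y : E⦄, Y ∈ P → ∀ (c : Y ⟶ B), RegEpi c → RegEpi (expF.map c)) →
      ∀ B : E, ∃ Y ∈ P, ∃ c : Y ⟶ B, RegEpi c ∧ RegEpi (expF.map c) := by
    intro h2 B
    obtain ⟨Y, hY, c, hc⟩ := hP.2 B
    exact ⟨Y, hY, c, hc, h2 hY c hc⟩
  have h31 : (∀ B : E, ∃ Y ∈ P, ∃ c : Y ⟶ B, RegEpi c ∧ RegEpi (expF.map c)) →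
      InternallyProjective X := by
    refine fun h3 => internallyProjective_of_forall_exists_regEpi_map adj hE fun B => ?_
    obtain ⟨Y, hY, c, -, hc⟩ := h3 B
    exact ⟨Y, c, hP.1 Y hY, hc⟩
  exact ⟨⟨h12, h31 ∘ h23⟩, ⟨h23 ∘ h12, h31⟩⟩

/-- For `X ∈ P` exponentiable in `E` (with right adjoint `expF` to
`(−) ⨯ X`), the following are equivalent: (1) `X` is internally projective;
(2) `(−)^X` sends every `P`-cover to a regular epi; (3) every object admits a
`P`-cover sent by `(−)^X` to a regular epi. -/
theorem stmt12 {E : Type u} [Category.{v} E] [HasFiniteLimits E]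
    (hE : IsExact E) (P : Set E) (hP : IsProjectiveCover P)
    (X : E) (hX : X ∈ P) (expF : E ⥤ E) (adj : prod.functor.flip.obj X ⊣ expF) :
    (InternallyProjective X ↔
       ∀ ⦃B Y : E⦄, Y ∈ P → ∀ (c : Y ⟶ B), RegEpi c → RegEpi (expF.map c)) ∧
    (InternallyProjective X ↔
       ∀ B : E, ∃ Y ∈ P, ∃ c : Y ⟶ B, RegEpi c ∧ RegEpi (expF.map c)) :=
  stmt12_general hE P hP X expF adj

end ExComp
end
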